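/- Let T ≥ 2, K ≥ 1, and E ≥ 1 be natural numbers. Suppose n : {1,…,K} × {0,1,…,E} → ℕ satisfies: (i) for each arm k, the map e ↦ n(k,e) is nondecreasing in e; (ii) n(k,0) ≥ 1 for every k; (iii) for every episode index e ∈ {0,…,E−2} there exists an arm k with n(k,e+1) ≥ 2·n(k,e); and (iv) Σ_{k=1}^K n(k,E) ≤ T·K. Then E ≤ 1 + K·log₂(T). -/
import Mathlib

/-- Lemma 1 (Number of episodes): if each arm starts with at least one sample,
sample counts are nondecreasing across episodes, every non-terminal episode doubles
the sample count of some arm, and the total number of samples is at most `T * K`,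
then the number of episodes `E` is at most `1 + K * log₂ T`. -/
theorem stmt_0 (T K E : ℕ) (hT : 2 ≤ T) (hK : 1 ≤ K) (hE : 1 ≤ E)
    (n : Fin K → ℕ → ℕ)
    (hmono : ∀ k : Fin K, Monotone (n k))
    (hinit : ∀ k : Fin K, 1 ≤ n k 0)
    (hdouble : ∀ e : ℕ, e < E - 1 → ∃ k : Fin K, 2 * n k e ≤ n k (e + 1))
    (hsum : ∑ k : Fin K, n k E ≤ T * K) :
    (E : ℝ) ≤ 1 + (K : ℝ) * Real.logb 2 T := by
  classical
  -- choose the doubled arm at each step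
  have hKpos : 0 < K := hK
  let f : ℕ → Fin K := fun e =>
    if h : e < E - 1 then (hdouble e h).choose else ⟨0, hKpos⟩
  have hf : ∀ e, e < E - 1 → 2 * n (f e) e ≤ n (f e) (e + 1) := by
    intro e h
    simp only [f, dif_pos h]
    exact (hdouble e h).choose_spec
  -- counter
  let c : Fin K → ℕ → ℕ := fun k e =>
    ((Finset.range e).filter (fun e' => e' < E - 1 ∧ f e' = k)).card
  have key : ∀ e k, 2 ^ (c k e) ≤ n k e := by
    intro e
    induction e with
    | zero => intro k; simpa [c] using hinit k
    | succ e ih =>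
      intro k
      have hstep : c k (e + 1) = c k e + (if e < E - 1 ∧ f e = k then 1 else 0) := by
        simp [c, Finset.range_add_one, Finset.filter_insert]
        split <;> simp [Finset.card_insert_of_notMem, Finset.mem_filter]
      rw [hstep]
      by_cases h : e < E - 1 ∧ f e = k
      · rw [if_pos h, pow_succ]
        calc 2 ^ c k e * 2 = 2 * 2 ^ c k e := by ring
          _ ≤ 2 * n k e := by
              exact Nat.mul_le_mul_left 2 (ih k)
          _ ≤ n k (e + 1) := by rw [← h.2]; exact hf e h.1
      · rw [if_neg h, add_zero]
        exact le_trans (ih k) (hmono k (Nat.le_succ e))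
  -- total count
  have hsumc : ∑ k : Fin K, c k E = E - 1 := by
    have : ∀ e' ∈ Finset.range (E - 1), (fun e' => f e') e' ∈ Finset.univ := fun _ _ =>
      Finset.mem_univ _
    have h1 : ((Finset.range (E-1)).card) = ∑ k : Fin K, ((Finset.range (E-1)).filter (fun e' => f e' = k)).card :=
      Finset.card_eq_sum_card_fiberwise this
    have h2 : ∀ k, c k E = ((Finset.range (E-1)).filter (fun e' => f e' = k)).card := by
      intro k
      have hseteq : (Finset.range E).filter (fun e' => e' < E - 1 ∧ f e' = k)
          = (Finset.range (E-1)).filter (fun e' => f e' = k) := by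
        ext e'
        simp only [Finset.mem_filter, Finset.mem_range]
        constructor
        · rintro ⟨_, h, hk⟩; exact ⟨h, hk⟩
        · rintro ⟨h, hk⟩; exact ⟨lt_of_lt_of_le h (Nat.sub_le _ _), h, hk⟩
      simp only [c, hseteq]
    simp only [h2]
    rw [← h1, Finset.card_range]
  -- products
  have hprod : (2 : ℕ) ^ (E - 1) ≤ ∏ k : Fin K, n k E := by
    calc (2:ℕ) ^ (E-1) = ∏ k : Fin K, 2 ^ (c k E) := by
          rw [Finset.prod_pow_eq_pow_sum, hsumc]
      _ ≤ ∏ k : Fin K, n k E := Finset.prod_le_prod' (fun k _ => key E k)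
  -- AM-GM: ∏ n k E ≤ T ^ K
  have hz : ∀ k : Fin K, (0:ℝ) ≤ (n k E : ℝ) := fun k => Nat.cast_nonneg _
  have hw' : ∑ _k : Fin K, (1 / (K:ℝ)) = 1 := by
    rw [Finset.sum_const, Finset.card_univ, Fintype.card_fin, nsmul_eq_mul]
    field_simp
  have hamgm := Real.geom_mean_le_arith_mean_weighted Finset.univ
      (fun _ => 1 / (K:ℝ)) (fun k => (n k E : ℝ))
      (fun _ _ => by positivity) hw' (fun k _ => hz k)
  have hK0' : (0:ℝ) < (K:ℝ) := by exact_mod_cast hKpos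
  have hrhs : ∑ k : Fin K, (1/(K:ℝ)) * (n k E : ℝ) ≤ (T:ℝ) := by
    rw [← Finset.mul_sum]
    rw [div_mul_eq_mul_div, one_mul, div_le_iff₀ hK0']
    calc (∑ k : Fin K, ((n k E : ℝ))) = ((∑ k : Fin K, n k E : ℕ) : ℝ) := by push_cast; ring
      _ ≤ ((T*K : ℕ):ℝ) := by exact_mod_cast hsum
      _ = (T:ℝ) * K := by push_cast; ring
  have hprodrpow : ∏ k : Fin K, ((n k E : ℝ)) ^ ((1:ℝ)/(K:ℝ)) = (∏ k : Fin K, (n k E : ℝ)) ^ ((1:ℝ)/(K:ℝ)) := by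
    rw [← Real.finset_prod_rpow _ _ (fun k _ => hz k)]
  have hgm : (∏ k : Fin K, (n k E : ℝ)) ^ ((1:ℝ)/(K:ℝ)) ≤ (T:ℝ) := by
    rw [← hprodrpow]; exact le_trans hamgm hrhs
  have hprodpos : (0:ℝ) ≤ ∏ k : Fin K, (n k E : ℝ) :=
    Finset.prod_nonneg (fun k _ => hz k)
  have hTK : (∏ k : Fin K, (n k E : ℝ)) ≤ (T:ℝ) ^ (K:ℕ) := by
    have := Real.rpow_le_rpow (Real.rpow_nonneg hprodpos _) hgm (le_of_lt hK0')
    rwa [← Real.rpow_mul hprodpos, one_div, inv_mul_cancel₀ (ne_of_gt hK0'),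
      Real.rpow_one, Real.rpow_natCast] at this
  -- combine
  have hfinal : (2:ℝ) ^ (E-1 : ℕ) ≤ (T:ℝ) ^ (K:ℕ) := by
    calc (2:ℝ) ^ (E-1:ℕ) = (((2:ℕ) ^ (E-1:ℕ) : ℕ):ℝ) := by push_cast; ring
      _ ≤ ((∏ k : Fin K, n k E : ℕ) : ℝ) := by exact_mod_cast hprod
      _ = ∏ k : Fin K, (n k E : ℝ) := by push_cast; ring
      _ ≤ _ := hTK
  have hlog := Real.logb_le_logb_of_le (by norm_num : (1:ℝ) < 2) (by positivity) hfinal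
  rw [Real.logb_pow, Real.logb_pow, Real.logb_self_eq_one (by norm_num)] at hlog
  have hE1 : ((E - 1 : ℕ) : ℝ) = (E:ℝ) - 1 := by
    have := Nat.cast_sub hE (R := ℝ); simpa using this
  rw [hE1, mul_one] at hlog
  linarith
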